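/- arXiv:1907.00790 — 4 statements merged into one kernel-verified Lean document; each statement's English description precedes it below -/
import Mathlib

section
/- Let A be a vector space of measurable functions on a measurable space X containing the constant function 1, let α be a nonzero multi-index with ∂^α A ⊆ A, and let L : A → ℝ be a linear functional. Define (∂^α L)(a) := (-1)^{|α|} L(∂^α a). Then ∂^α L is a moment functional (i.e., is represented by a positive measure) if and only if ∂^α L = 0. -/
open MeasureTheory

/-- Let `V` be a vector space of measurable functions containing the constant `1`,
`D = ∂^α` a linear differential operator with `α ≠ 0` (so `D 1 = 0`) mapping `V` into
itself, and `L : V → ℝ` linear.  The derivative functional `∂^α L = (-1)^{|α|} L ∘ ∂^α`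
is a moment functional (represented by a positive measure) iff it is zero. -/
theorem stmt1 {X : Type*} [MeasurableSpace X]
    (V : Submodule ℝ (X → ℝ))
    (hmeas : ∀ f ∈ V, Measurable f)
    (one_mem : (fun _ => (1 : ℝ)) ∈ V)
    (D : (X → ℝ) →ₗ[ℝ] (X → ℝ))
    (hDV : ∀ f ∈ V, D f ∈ V)
    (hD1 : D (fun _ => (1 : ℝ)) = 0)
    (ε : ℝ) (hε : ε = 1 ∨ ε = -1)
    (L DL : V →ₗ[ℝ] ℝ)
    (hDL : ∀ f : V, DL f = ε * L ⟨D (f : X → ℝ), hDV f f.2⟩) :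
    (∃ μ : Measure X, ∀ f : V,
        Integrable (f : X → ℝ) μ ∧ DL f = ∫ x, (f : X → ℝ) x ∂μ) ↔ DL = 0 := by
  constructor
  · rintro ⟨μ, hμ⟩
    -- DL applied to the constant 1 is zero
    have h1 : DL ⟨fun _ => (1 : ℝ), one_mem⟩ = 0 := by
      rw [hDL]
      have : (⟨D (fun _ => (1 : ℝ)), hDV _ one_mem⟩ : V) = 0 := by
        ext
        simp [hD1]
      rw [this]
      simp
    obtain ⟨hint, heq⟩ := hμ ⟨fun _ => (1 : ℝ), one_mem⟩
    have hfin : IsFiniteMeasure μ := ⟨by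
      have := hint.2
      exact (by simpa [hasFiniteIntegral_const_iff] using this : IsFiniteMeasure μ).measure_univ_lt_top⟩
    have hμ0 : μ Set.univ = 0 := by
      have : ((μ Set.univ).toReal : ℝ) = 0 := by
        rw [h1] at heq
        simpa [Measure.real] using heq.symm
      exact (ENNReal.toReal_eq_zero_iff _).mp this |>.resolve_right (measure_ne_top μ _)
    have hzero : μ = 0 := by
      ext s hs
      simpa using measure_mono_null (Set.subset_univ s) hμ0
    ext f
    have := (hμ f).2
    rw [hzero] at this
    simpa using this
  · rintro rfl
    refine ⟨0, fun f => ⟨?_, ?_⟩⟩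
    · simp [integrable_zero_measure]
    · simp
end

section
/- Let s = (s₀, ..., s_{2k}) ∈ ℝ^{2k+1} be such that the (k+1)×(k+1) Hankel matrix H(s) = (s_{i+j})_{i,j=0}^k is positive semidefinite and singular with one-dimensional kernel spanned by v = (v_k, ..., v_1, v_0). If s admits a representing measure, then every representing measure μ = Σ_{i} c_i δ_{x_i} of s is supported on the zero set of the polynomial p(x) = v_k + v_{k-1}x + ... + v_0 x^k; in particular, for any atom x of μ, p(x) = 0. -/
/-- If the Hankel matrix `H(s) = (s_{i+j})` of `s = (s₀,…,s_{2k})` is positive semidefinite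
and singular with one-dimensional kernel spanned by `v`, then every finitely atomic
representing measure `Σ cᵢ δ_{xᵢ}` of `s` is supported on the zeros of
`p(x) = Σⱼ vⱼ xʲ`: every atom `xᵢ` satisfies `p(xᵢ) = 0`. -/
theorem stmt9 (k : ℕ) (s : ℕ → ℝ) (v : Fin (k+1) → ℝ) (hv : v ≠ 0)
    (hpsd : (Matrix.of fun i j : Fin (k+1) => s ((i : ℕ) + (j : ℕ))).PosSemidef)
    (hker : (Matrix.of fun i j : Fin (k+1) => s ((i : ℕ) + (j : ℕ))).mulVec v = 0)
    (hker1 : ∀ w : Fin (k+1) → ℝ,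
      (Matrix.of fun i j : Fin (k+1) => s ((i : ℕ) + (j : ℕ))).mulVec w = 0 → ∃ t : ℝ, w = t • v)
    (m : ℕ) (c : Fin m → ℝ) (hc : ∀ i, 0 < c i) (x : Fin m → ℝ)
    (hrep : ∀ j ≤ 2*k, ∑ i, c i * (x i)^j = s j) :
    ∀ i, ∑ j : Fin (k+1), v j * (x i)^(j : ℕ) = 0 := by
  have key : ∑ i, c i * (∑ j : Fin (k+1), v j * (x i)^(j : ℕ))^2 = 0 := by
    have h1 : ∑ i, c i * (∑ j : Fin (k+1), v j * (x i)^(j : ℕ))^2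
        = ∑ a : Fin (k+1), ∑ b : Fin (k+1), v a * v b * s ((a:ℕ) + (b:ℕ)) := by
      have expand : ∀ i, c i * (∑ j : Fin (k+1), v j * (x i)^(j : ℕ))^2
          = ∑ a : Fin (k+1), ∑ b : Fin (k+1),
              v a * v b * (c i * (x i)^((a:ℕ)+(b:ℕ))) := by
        intro i
        rw [sq, Finset.sum_mul_sum, Finset.mul_sum]
        refine Finset.sum_congr rfl fun a _ => ?_
        rw [Finset.mul_sum]
        refine Finset.sum_congr rfl fun b _ => ?_
        rw [pow_add]; ring
      simp_rw [expand]
      rw [Finset.sum_comm]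
      refine Finset.sum_congr rfl fun a _ => ?_
      rw [Finset.sum_comm]
      refine Finset.sum_congr rfl fun b _ => ?_
      rw [← Finset.mul_sum, hrep ((a:ℕ)+(b:ℕ))]
      have ha := a.is_le
      have hb := b.is_le
      omega
    have h2 : ∑ a : Fin (k+1), ∑ b : Fin (k+1), v a * v b * s ((a:ℕ) + (b:ℕ))
        = dotProduct v ((Matrix.of fun i j : Fin (k+1) => s ((i : ℕ) + (j : ℕ))).mulVec v) := by
      simp [dotProduct, Matrix.mulVec, Finset.mul_sum]
      refine Finset.sum_congr rfl fun a _ => Finset.sum_congr rfl fun b _ => by ring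
    rw [h1, h2, hker]
    simp
  intro i
  have hz := (Finset.sum_eq_zero_iff_of_nonneg (fun i _ =>
    mul_nonneg (hc i).le (sq_nonneg _))).mp key i (Finset.mem_univ i)
  have := mul_eq_zero.mp hz
  rcases this with h | h
  · exact absurd h (hc i).ne'
  · exact pow_eq_zero_iff (by norm_num) |>.mp h
end

section
/- Let a > 0, b ∈ ℝ, and f(x) = exp(-(a/2)(x-b)²). For every l ∈ ℕ₀ and i ∈ ℕ₀, the operator Δ_a defined by (Δ_a f)(x) = (1/a)(f'(x) + a x f(x)) satisfies ∫ x^i · (Δ_a^l f)(x) dx = b^l · ∫ x^i · f(x) dx; that is, Δ_a^l t_a(b) = b^l · t_a(b), where t_a(b) is the moment vector of f. -/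
open MeasureTheory

lemma gauss_deriv (a b : ℝ) (y : ℝ) :
    deriv (fun y => Real.exp (-(a/2) * (y - b)^2)) y
      = (-a * (y - b)) * Real.exp (-(a/2) * (y - b)^2) := by
  have h1 : HasDerivAt (fun y : ℝ => -(a/2) * (y - b)^2) (-(a/2) * (2 * (y - b))) y := by
    have : HasDerivAt (fun y : ℝ => (y - b)^2) (2 * (y - b)) y := by
      have h := ((hasDerivAt_id y).sub_const b).pow 2
      simpa [Pi.pow_def] using h
    simpa using this.const_mul (-(a/2))
  have h2 := h1.exp
  rw [h2.deriv]
  ring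

lemma gauss_iter (a b : ℝ) (ha : a ≠ 0) (l : ℕ) :
    ((fun f : ℝ → ℝ => fun y => (1/a) * (deriv f y + a * y * f y))^[l]
        (fun y => Real.exp (-(a/2) * (y - b)^2)))
      = fun y => b^l * Real.exp (-(a/2) * (y - b)^2) := by
  induction l with
  | zero => simp
  | succ n ih =>
    rw [Function.iterate_succ_apply', ih]
    funext y
    have hd : deriv (fun y => b^n * Real.exp (-(a/2) * (y - b)^2)) y
        = b^n * ((-a * (y - b)) * Real.exp (-(a/2) * (y - b)^2)) := by
      rw [deriv_const_mul, gauss_deriv]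
      · exact (Real.differentiable_exp.comp
          (((differentiable_id.sub_const b).pow 2).const_mul (-(a/2)))).differentiableAt
    simp only [hd]
    field_simp
    ring

/-- For `f(x) = exp(-(a/2)(x-b)²)` and the operator `Δ_a f = (1/a)(f' + a·x·f)`,
`∫ xⁱ (Δ_a^l f)(x) dx = b^l ∫ xⁱ f(x) dx`, i.e. `Δ_a^l t_a(b) = b^l t_a(b)`. -/
theorem stmt16 (a b : ℝ) (ha : 0 < a) (l i : ℕ) :
    (∫ x : ℝ, x^i * ((fun f : ℝ → ℝ => fun y => (1/a) * (deriv f y + a * y * f y))^[l]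
        (fun y => Real.exp (-(a/2) * (y - b)^2)) x))
      = b^l * ∫ x : ℝ, x^i * Real.exp (-(a/2) * (x - b)^2) := by
  rw [gauss_iter a b ha.ne' l]
  simp_rw [show ∀ x : ℝ, x^i * (b^l * Real.exp (-(a/2) * (x - b)^2))
    = b^l * (x^i * Real.exp (-(a/2) * (x - b)^2)) from fun x => by ring]
  exact integral_const_mul _ _
end

section
/- Let k, d ∈ ℕ with k ≥ 4d - 2, a > 0, b ∈ ℝ, c ≠ 0, and let s_i = ∫ x^i·c·exp(-(a/(2d))(x-b)^{2d}) dλ(x) for i = 0, ..., k. Then for all 0 ≤ i ≤ k - 2d + 1: -i·s_{i-1} + a·Σ_{j=0}^{2d-1} C(2d-1, j)·(-b)^{2d-1-j}·s_{i+j} = 0 (with s_{-1} := 0); equivalently, the vector (1, a·C(2d-1,0)(-b)^{2d-1}, a·C(2d-1,1)(-b)^{2d-2}, ..., a·C(2d-1,2d-1)) lies in the kernel of the matrix (∂s, s, M₁s, ..., M_{2d-1}s) truncated at degree k - 2d + 1. -/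
open MeasureTheory

/-- Integrability of `|y|^n * exp(-c' y^(2d))`. -/
lemma stmt19_aux1 {c' : ℝ} (hc' : 0 < c') {d : ℕ} (hd : 1 ≤ d) (n : ℕ) :
    Integrable fun y : ℝ => |y|^n * Real.exp (-c' * y^(2*d)) := by
  have base : ∀ m : ℕ, Integrable fun y : ℝ => y^m * Real.exp (-c' * y^2) := by
    intro m
    have h := integrable_rpow_mul_exp_neg_mul_sq hc' (s := (m : ℝ))
      (by have : (0:ℝ) ≤ (m:ℝ) := Nat.cast_nonneg m; linarith)
    simpa [Real.rpow_natCast] using h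
  have hg : Integrable fun y : ℝ =>
      Real.exp c' * (Real.exp (-c' * y^2) + y^(2*n) * Real.exp (-c' * y^2)) :=
    ((integrable_exp_neg_mul_sq hc').add (base (2*n))).const_mul _
  refine hg.mono' ?_ ?_
  · apply Continuous.aestronglyMeasurable
    exact (continuous_abs.pow n).mul ((continuous_const.mul (continuous_pow (2*d))).rexp)
  · filter_upwards with y
    have h1 : |y|^n ≤ 1 + y^(2*n) := by
      rcases le_or_gt (|y|) 1 with h | h
      · have : |y|^n ≤ 1 := pow_le_one₀ (abs_nonneg y) h
        nlinarith [even_two_mul n, (even_two_mul n).pow_nonneg y]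
      · have h2 : |y|^n ≤ |y|^(2*n) := pow_le_pow_right₀ h.le (by omega)
        have h3 : |y|^(2*n) = y^(2*n) := by
          rw [pow_mul, pow_mul, sq_abs]
        nlinarith
    have h2 : Real.exp (-c' * y^(2*d)) ≤ Real.exp c' * Real.exp (-c' * y^2) := by
      rw [← Real.exp_add]
      apply Real.exp_le_exp.2
      have hy : y^2 - 1 ≤ y^(2*d) := by
        rw [pow_mul]
        rcases le_or_gt (y^2) 1 with h | h
        · have : (0:ℝ) ≤ (y^2)^d := by positivity
          linarith
        · have := le_self_pow₀ h.le (by omega : d ≠ 0)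
          linarith
      nlinarith
    have hnn : (0:ℝ) ≤ 1 + y^(2*n) := by
      have := (even_two_mul n).pow_nonneg y; linarith
    calc ‖|y|^n * Real.exp (-c' * y^(2*d))‖
        = |y|^n * Real.exp (-c' * y^(2*d)) := by
          rw [Real.norm_eq_abs, abs_mul, abs_pow, abs_abs,
            abs_of_pos (Real.exp_pos _)]
      _ ≤ (1 + y^(2*n)) * (Real.exp c' * Real.exp (-c' * y^2)) := by
          apply mul_le_mul h1 h2 (Real.exp_pos _).le hnn
      _ = Real.exp c' * (Real.exp (-c' * y^2) + y^(2*n) * Real.exp (-c' * y^2)) := by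
          ring

/-- Integrability of the moments `x^n * exp(-c' (x-b)^(2d))`. -/
lemma stmt19_aux2 {c' : ℝ} (hc' : 0 < c') {d : ℕ} (hd : 1 ≤ d) (n : ℕ) (b : ℝ) :
    Integrable fun x : ℝ => x^n * Real.exp (-c' * (x - b)^(2*d)) := by
  set G : ℝ → ℝ := fun y => ∑ j ∈ Finset.range (n+1),
      |y|^j * |b|^(n-j) * (n.choose j : ℝ) * Real.exp (-c' * y^(2*d)) with hG
  have hGint : Integrable G := by
    apply integrable_finset_sum
    intro j _
    have h := ((stmt19_aux1 hc' hd j).mul_const (|b|^(n-j) * (n.choose j : ℝ)))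
    refine h.congr (Filter.Eventually.of_forall fun y => ?_)
    ring
  have hcomp : Integrable fun x : ℝ => G (x - b) := hGint.comp_sub_right b
  refine hcomp.mono' ?_ ?_
  · apply Continuous.aestronglyMeasurable
    exact (continuous_pow n).mul
      ((continuous_const.mul ((continuous_id.sub continuous_const).pow (2*d))).rexp)
  · filter_upwards with x
    have h1 : |x|^n ≤ (|x - b| + |b|)^n := by
      apply pow_le_pow_left₀ (abs_nonneg x)
      calc |x| = |(x - b) + b| := by ring_nf
        _ ≤ |x - b| + |b| := abs_add_le _ _
    have h2 : (|x - b| + |b|)^n * Real.exp (-c' * (x-b)^(2*d)) = G (x - b) := by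
      rw [hG]
      simp only
      rw [add_pow, Finset.sum_mul]
    calc ‖x^n * Real.exp (-c' * (x - b)^(2*d))‖
        = |x|^n * Real.exp (-c' * (x - b)^(2*d)) := by
          rw [Real.norm_eq_abs, abs_mul, abs_pow, abs_of_pos (Real.exp_pos _)]
      _ ≤ (|x - b| + |b|)^n * Real.exp (-c' * (x-b)^(2*d)) :=
          mul_le_mul_of_nonneg_right h1 (Real.exp_pos _).le
      _ = G (x - b) := h2

/-- The moments `sᵢ = ∫ xⁱ c·exp(-(a/(2d))(x-b)^{2d}) dλ` satisfy, for `0 ≤ i ≤ k-2d+1`,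
`-i·s_{i-1} + a·Σ_{j=0}^{2d-1} C(2d-1,j)(-b)^{2d-1-j} s_{i+j} = 0` (with `s₋₁ := 0`). -/
theorem stmt19 (k d : ℕ) (hd : 1 ≤ d) (hk : 4*d - 2 ≤ k)
    (a b c : ℝ) (ha : 0 < a) (hc : c ≠ 0)
    (s : ℕ → ℝ)
    (hs : ∀ i ≤ k, s i = ∫ x : ℝ, x^i * (c * Real.exp (-(a/(2*(d : ℝ))) * (x - b)^(2*d)))) :
    ∀ i ≤ k - 2*d + 1,
      -(i : ℝ) * s (i - 1)
        + a * ∑ j ∈ Finset.range (2*d),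
            (Nat.choose (2*d - 1) j : ℝ) * (-b)^(2*d - 1 - j) * s (i + j) = 0 := by
  intro i hi
  have hdR : (0:ℝ) < (d:ℝ) := by exact_mod_cast hd
  set c' : ℝ := a / (2*(d:ℝ)) with hc'def
  have hc' : 0 < c' := by positivity
  have hca : c' * (2*(d:ℝ)) = a := by
    rw [hc'def]; field_simp
  set E : ℝ → ℝ := fun x => c * Real.exp (-c' * (x - b)^(2*d)) with hE
  have Mint : ∀ n : ℕ, Integrable fun x => x^n * E x := by
    intro n
    have h := (stmt19_aux2 hc' hd n b).const_mul c
    refine h.congr (Filter.Eventually.of_forall fun x => ?_)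
    rw [hE]; ring
  have hsE : ∀ n, n ≤ k → s n = ∫ x : ℝ, x^n * E x := hs
  -- the pointwise rewrite of the second term
  have hrw : ∀ x : ℝ, (x-b)^(2*d-1) * (x^i * E x)
      = ∑ j ∈ Finset.range (2*d),
          ((2*d-1).choose j : ℝ) * (-b)^(2*d-1-j) * (x^(i+j) * E x) := by
    intro x
    have h2d1 : 2*d - 1 + 1 = 2*d := by omega
    rw [show x - b = x + (-b) by ring, add_pow, h2d1, Finset.sum_mul]
    refine Finset.sum_congr rfl fun j _ => ?_
    rw [pow_add]; ring
  -- derivative computation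
  have hderiv : ∀ x : ℝ, HasDerivAt (fun x => x^i * E x)
      ((i:ℝ) * x^(i-1) * E x - a * ((x-b)^(2*d-1) * (x^i * E x))) x := by
    intro x
    have h1 : HasDerivAt (fun x : ℝ => (x - b)^(2*d))
        (((2*d : ℕ):ℝ) * (x-b)^(2*d-1) * 1) x :=
      ((hasDerivAt_id x).sub_const b).pow (2*d)
    have h3 : HasDerivAt (fun x => Real.exp (-c' * (x-b)^(2*d)))
        (Real.exp (-c' * (x-b)^(2*d)) * (-c' * (((2*d : ℕ):ℝ) * (x-b)^(2*d-1) * 1))) x :=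
      (h1.const_mul (-c')).exp
    have h4 := h3.const_mul c
    have h5 := (hasDerivAt_pow i x).mul h4
    refine h5.congr_deriv ?_
    rw [hE]
    simp only
    rw [← hca]
    push_cast
    ring
  have hint1 : Integrable fun x : ℝ => (i:ℝ) * x^(i-1) * E x := by
    have h := (Mint (i-1)).const_mul (i:ℝ)
    refine h.congr (Filter.Eventually.of_forall fun x => ?_)
    ring
  have hint2 : Integrable fun x : ℝ => a * ((x-b)^(2*d-1) * (x^i * E x)) := by
    have h : Integrable fun x : ℝ => ∑ j ∈ Finset.range (2*d),
        ((2*d-1).choose j : ℝ) * (-b)^(2*d-1-j) * (x^(i+j) * E x) := by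
      apply integrable_finset_sum
      intro j _
      exact (Mint (i+j)).const_mul _
    have h2 := h.const_mul a
    refine h2.congr (Filter.Eventually.of_forall fun x => ?_)
    dsimp only
    rw [hrw x]
  have hDint : Integrable fun x : ℝ =>
      (i:ℝ) * x^(i-1) * E x - a * ((x-b)^(2*d-1) * (x^i * E x)) := hint1.sub hint2
  have hzero : (∫ x : ℝ, ((i:ℝ) * x^(i-1) * E x - a * ((x-b)^(2*d-1) * (x^i * E x)))) = 0 :=
    integral_eq_zero_of_hasDerivAt_of_integrable hderiv hDint (Mint i)
  rw [integral_sub hint1 hint2] at hzero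
  have e1 : (∫ x : ℝ, (i:ℝ) * x^(i-1) * E x) = (i:ℝ) * s (i-1) := by
    rw [hsE (i-1) (by omega), ← integral_const_mul]
    congr 1; funext x; ring
  have e2 : (∫ x : ℝ, a * ((x-b)^(2*d-1) * (x^i * E x)))
      = a * ∑ j ∈ Finset.range (2*d),
          ((2*d-1).choose j : ℝ) * (-b)^(2*d-1-j) * s (i+j) := by
    simp only [hrw]
    rw [integral_const_mul,
      integral_finset_sum _ (fun j _ => (Mint (i+j)).const_mul _)]
    congr 1
    refine Finset.sum_congr rfl fun j hj => ?_
    rw [integral_const_mul, hsE (i+j)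
      (by have := Finset.mem_range.mp hj; omega)]
  rw [e1, e2] at hzero
  linarith
end
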